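/- Fix a time series x of length n with values in ℝ^d and let D_x : (ℝ^d)^m → ℝ, D_x(p) = dtw(p,x)², be the squared DTW distortion. If D_x is differentiable at a point p and w is an optimal warping path between p and x with warping matrix W and valence matrix V, then the gradient of D_x at p equals 2(Vp − Wx); i.e., for each i ∈ {1,…,m}, the partial gradient with respect to p_i equals 2(V_{ii} p_i − Σ_{j=1}^n W_{ij} x_j). -/

import Mathlib

open scoped RealInnerProductSpace

/-- A warping path of order `m × n` (0-based indexing: point `(i,j)` of the paper's
`{1,…,m} × {1,…,n}` corresponds to `(⟨i-1⟩, ⟨j-1⟩) : Fin m × Fin n`). -/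
structure WarpingPath (m n : ℕ) where
  steps : List (Fin m × Fin n)
  ne : steps ≠ []
  head_fst : (steps.head ne).1.val = 0
  head_snd : (steps.head ne).2.val = 0
  last_fst : (steps.getLast ne).1.val = m - 1
  last_snd : (steps.getLast ne).2.val = n - 1
  step : ∀ l : ℕ, (h : l + 1 < steps.length) →
    ((steps.get ⟨l + 1, h⟩).1.val = (steps.get ⟨l, Nat.lt_of_succ_lt h⟩).1.val + 1 ∧
      (steps.get ⟨l + 1, h⟩).2.val = (steps.get ⟨l, Nat.lt_of_succ_lt h⟩).2.val) ∨
    ((steps.get ⟨l + 1, h⟩).1.val = (steps.get ⟨l, Nat.lt_of_succ_lt h⟩).1.val ∧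
      (steps.get ⟨l + 1, h⟩).2.val = (steps.get ⟨l, Nat.lt_of_succ_lt h⟩).2.val + 1) ∨
    ((steps.get ⟨l + 1, h⟩).1.val = (steps.get ⟨l, Nat.lt_of_succ_lt h⟩).1.val + 1 ∧
      (steps.get ⟨l + 1, h⟩).2.val = (steps.get ⟨l, Nat.lt_of_succ_lt h⟩).2.val + 1)

/-- The cost `C_w(x,y) = Σ_l ‖x_{i_l} - y_{j_l}‖²` of aligning `x` and `y` along `w`. -/
noncomputable def cost {m n d : ℕ} (x : Fin m → EuclideanSpace ℝ (Fin d))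
    (y : Fin n → EuclideanSpace ℝ (Fin d)) (w : WarpingPath m n) : ℝ :=
  (w.steps.map (fun p => ‖x p.1 - y p.2‖ ^ 2)).sum

/-- The DTW distance `dtw(x,y) = min { √C_w(x,y) : w ∈ W_{m,n} }`. -/
noncomputable def dtw {m n d : ℕ} (x : Fin m → EuclideanSpace ℝ (Fin d))
    (y : Fin n → EuclideanSpace ℝ (Fin d)) : ℝ :=
  ⨅ w : WarpingPath m n, Real.sqrt (cost x y w)

/-- The warping matrix `W` of a warping path. -/
def warpMat {m n : ℕ} (w : WarpingPath m n) (i : Fin m) (j : Fin n) : ℕ :=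
  if (i, j) ∈ w.steps then 1 else 0

/-- The diagonal entries `V_{ii} = Σ_j W_{ij}` of the valence matrix of a warping path. -/
def valence {m n : ℕ} (w : WarpingPath m n) (i : Fin m) : ℕ :=
  ∑ j : Fin n, warpMat w i j

/-! Along any fixed warping path `w` the cost `C_w(·, x)` is a smooth quadratic that dominates
`D_x = dtw(·, x)²` everywhere and touches it at `p` when `w` is optimal there. Hence `C_w - D_x`
has a minimum at `p`, so where `D_x` is differentiable its derivative is that of `C_w`, which is
computed term by term. -/

namespace WarpingPath

variable {m n : ℕ}

theorem nodup (w : WarpingPath m n) : w.steps.Nodup := by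
  have hchain : (w.steps.map fun s => s.1.val + s.2.val).IsChain (· < ·) := by
    rw [List.isChain_iff_getElem]
    intro l hl
    rw [List.length_map] at hl
    rcases w.step l hl with ⟨h1, h2⟩ | ⟨h1, h2⟩ | ⟨h1, h2⟩ <;>
      simp only [List.get_eq_getElem] at h1 h2 <;> simp only [List.getElem_map] <;> omega
  exact hchain.pairwise.nodup.of_map _

theorem sum_map_steps {M : Type*} [AddCommMonoid M] (w : WarpingPath m n)
    (g : Fin m × Fin n → M) :
    (w.steps.map g).sum = ∑ i : Fin m, ∑ j : Fin n, warpMat w i j • g (i, j) := by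
  rw [← List.sum_toFinset g w.nodup, ← Fintype.sum_prod_type',
    ← Finset.univ_inter w.steps.toFinset, ← Finset.sum_ite_mem]
  simp only [warpMat, ite_smul, one_smul, zero_smul, List.mem_toFinset]

end WarpingPath

section Cost

variable {m n d : ℕ}

theorem cost_nonneg (x : Fin m → EuclideanSpace ℝ (Fin d))
    (y : Fin n → EuclideanSpace ℝ (Fin d)) (w : WarpingPath m n) : 0 ≤ cost x y w :=
  List.sum_nonneg <| by simp only [List.mem_map]; rintro _ ⟨s, -, rfl⟩; positivity

theorem cost_eq_sum_warpMat (x : Fin m → EuclideanSpace ℝ (Fin d))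
    (y : Fin n → EuclideanSpace ℝ (Fin d)) (w : WarpingPath m n) :
    cost x y w = ∑ i : Fin m, ∑ j : Fin n, (warpMat w i j : ℝ) * ‖x i - y j‖ ^ 2 := by
  simp only [cost, w.sum_map_steps, nsmul_eq_mul]

theorem hasFDerivAt_cost (p : Fin m → EuclideanSpace ℝ (Fin d))
    (y : Fin n → EuclideanSpace ℝ (Fin d)) (w : WarpingPath m n) :
    HasFDerivAt (fun q => cost q y w)
      (∑ i : Fin m, ∑ j : Fin n, ((warpMat w i j : ℝ) * 2) •
        (innerSL ℝ (p i - y j)).comp (ContinuousLinearMap.proj i)) p := by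
  simp_rw [cost_eq_sum_warpMat]
  refine HasFDerivAt.fun_sum fun i _ => HasFDerivAt.fun_sum fun j _ => ?_
  have hproj := (ContinuousLinearMap.proj (R := ℝ)
    (φ := fun _ : Fin m => EuclideanSpace ℝ (Fin d)) i).hasFDerivAt (x := p)
  refine ((hproj.sub_const (y j)).norm_sq.const_mul (warpMat w i j : ℝ)).congr_fderiv ?_
  ext v
  simp
  ring

theorem sq_dtw_le_cost (q : Fin m → EuclideanSpace ℝ (Fin d))
    (y : Fin n → EuclideanSpace ℝ (Fin d)) (w : WarpingPath m n) :
    dtw q y ^ 2 ≤ cost q y w := by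
  have hle : dtw q y ≤ √(cost q y w) :=
    ciInf_le ⟨0, by rintro _ ⟨w', rfl⟩; exact Real.sqrt_nonneg _⟩ w
  calc dtw q y ^ 2 ≤ √(cost q y w) ^ 2 :=
        pow_le_pow_left₀ (Real.iInf_nonneg fun _ => Real.sqrt_nonneg _) hle 2
    _ = cost q y w := Real.sq_sqrt (cost_nonneg q y w)

end Cost

theorem HasFDerivAt.eq_of_eventuallyLE_of_eq {E : Type*} [NormedAddCommGroup E]
    [NormedSpace ℝ E] {f g : E → ℝ} {f' g' : E →L[ℝ] ℝ} {a : E}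
    (hf : HasFDerivAt f f' a) (hg : HasFDerivAt g g' a)
    (hle : f ≤ᶠ[nhds a] g) (heq : f a = g a) : f' = g' := by
  have hmin : IsLocalMin (g - f) a := hle.mono fun y hy => by simpa [heq] using hy
  exact (sub_eq_zero.mp (hmin.hasFDerivAt_eq_zero (hg.sub hf))).symm

/-- If the squared DTW distortion `D_x(p) = dtw(p,x)²` is differentiable at `p`
and `w` is an optimal warping path between `p` and `x` with warping matrix `W` and valence
matrix `V`, then the gradient of `D_x` at `p` is `2(Vp - Wx)`. -/
theorem stmt12 (m n d : ℕ) (x : Fin n → EuclideanSpace ℝ (Fin d))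
    (p : Fin m → EuclideanSpace ℝ (Fin d)) (w : WarpingPath m n)
    (hdiff : DifferentiableAt ℝ
      (fun q : Fin m → EuclideanSpace ℝ (Fin d) => dtw q x ^ 2) p)
    (hopt : dtw p x = Real.sqrt (cost p x w)) :
    ∀ v : Fin m → EuclideanSpace ℝ (Fin d),
      fderiv ℝ (fun q : Fin m → EuclideanSpace ℝ (Fin d) => dtw q x ^ 2) p v =
        ∑ i : Fin m,
          ⟪(2 : ℝ) • ((valence w i : ℝ) • p i - ∑ j : Fin n, (warpMat w i j : ℝ) • x j),
            v i⟫ := by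
  intro v
  have hopt_sq : dtw p x ^ 2 = cost p x w := by rw [hopt, Real.sq_sqrt (cost_nonneg p x w)]
  rw [hdiff.hasFDerivAt.eq_of_eventuallyLE_of_eq (hasFDerivAt_cost p x w)
    (Filter.Eventually.of_forall fun q => sq_dtw_le_cost q x w) hopt_sq, sum_apply]
  refine Finset.sum_congr rfl fun i _ => ?_
  simp only [sum_apply, smul_apply, ContinuousLinearMap.comp_apply, ContinuousLinearMap.proj_apply,
    innerSL_apply_apply, smul_eq_mul, real_inner_smul_left, inner_sub_left, sum_inner, valence,
    Nat.cast_sum, Finset.sum_mul, Finset.mul_sum, ← Finset.sum_sub_distrib]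
  refine Finset.sum_congr rfl fun j _ => ?_
  ring
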